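/- arXiv:2105.02760 — 2 statements merged into one kernel-verified Lean document; each statement's English description precedes it below -/
import Mathlib

section
/- Let K be a finite field and S a sharply transitive subset of PGL(2,K) acting on P^1(K). If S contains elements g1, g2, g3, g4 represented by matrices [[0,b1],[c1,d1]], [[a2,0],[c2,d2]], [[a3,b3],[0,d3]], [[a4,b4],[c4,0]] respectively (each with one prescribed zero entry), then b1*d2*a3*c4 = c1*a2*d3*b4 as elements of K, up to the scalar ambiguity of the matrix representatives (i.e., the equality holds for appropriately normalized representatives, equivalently the ratio (b1 d2 a3 c4)/(c1 a2 d3 b4) equals 1). -/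
open Matrix Projectivization

noncomputable section

variable {K : Type*} [Field K]

/-- The projective line over `K`. -/
abbrev P1 (K : Type*) [Field K] := Projectivization K (Fin 2 → K)

/-- `PGL(2,K)`, the quotient of `GL(2,K)` by its center. -/
abbrev PGL2 (K : Type*) [Field K] :=
  GL (Fin 2) K ⧸ Subgroup.center (GL (Fin 2) K)

/-- The canonical projection `GL(2,K) → PGL(2,K)`. -/
def PGL2.proj (K : Type*) [Field K] : GL (Fin 2) K →* PGL2 K :=
  QuotientGroup.mk' _

instance glAction : MulAction (GL (Fin 2) K) (P1 K) where
  smul g x := x.map ((Matrix.GeneralLinearGroup.toLin g).toLinearEquiv : (Fin 2 → K) →ₗ[K] (Fin 2 → K))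
    (Matrix.GeneralLinearGroup.toLin g).toLinearEquiv.injective
  one_smul x := by
    induction x using Projectivization.ind with
    | h v hv =>
      show Projectivization.map _ _ _ = _
      rw [Projectivization.map_mk]
      congr 1
      rw [_root_.map_one]; rfl
  mul_smul g h x := by
    induction x using Projectivization.ind with
    | h v hv =>
      show Projectivization.map _ _ _ = Projectivization.map _ _ (Projectivization.map _ _ _)
      rw [Projectivization.map_mk, Projectivization.map_mk, Projectivization.map_mk]
      congr 1
      show ((↑g : Matrix (Fin 2) (Fin 2) K) * (↑h : Matrix (Fin 2) (Fin 2) K)) *ᵥ v = (↑g : Matrix (Fin 2) (Fin 2) K) *ᵥ ((↑h : Matrix (Fin 2) (Fin 2) K) *ᵥ v)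
      rw [Matrix.mulVec_mulVec]

theorem gl_smul_mk (g : GL (Fin 2) K) (v : Fin 2 → K) (hv : v ≠ 0) :
    g • Projectivization.mk K v hv =
      Projectivization.mk K ((↑g : Matrix (Fin 2) (Fin 2) K) *ᵥ v)
        ((Matrix.GeneralLinearGroup.toLin g).toLinearEquiv.map_ne_zero_iff.mpr hv) := by
  show Projectivization.map _ _ _ = _
  rw [Projectivization.map_mk]
  rfl

theorem center_smul_eq (g : GL (Fin 2) K) (hg : g ∈ Subgroup.center (GL (Fin 2) K)) (x : P1 K) :
    g • x = x := by
  have hcomm : ∀ B : GL (Fin 2) K, B * g = g * B := fun B => Subgroup.mem_center_iff.mp hg B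
  have key : ∀ M : Matrix (Fin 2) (Fin 2) K, M.det ≠ 0 →
      M * (↑g : Matrix (Fin 2) (Fin 2) K) = (↑g : Matrix (Fin 2) (Fin 2) K) * M := by
    intro M hM
    have := hcomm (Matrix.GeneralLinearGroup.mkOfDetNeZero M hM)
    exact congrArg Units.val this
  have h1 : !![(1:K),1;0,1] * (↑g : Matrix (Fin 2) (Fin 2) K) = (↑g : Matrix (Fin 2) (Fin 2) K) * !![(1:K),1;0,1] := key _ (by simp [Matrix.det_fin_two_of])
  have h2 : !![(1:K),0;1,1] * (↑g : Matrix (Fin 2) (Fin 2) K) = (↑g : Matrix (Fin 2) (Fin 2) K) * !![(1:K),0;1,1] := key _ (by simp [Matrix.det_fin_two_of])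
  have e1 := fun i j => congrFun (congrFun h1 i) j
  have e2 := fun i j => congrFun (congrFun h2 i) j
  have hc : (↑g : Matrix (Fin 2) (Fin 2) K) 1 0 = 0 := by
    have := e1 0 0
    simp [Matrix.mul_apply, Fin.sum_univ_two] at this
    linear_combination this
  have hb : (↑g : Matrix (Fin 2) (Fin 2) K) 0 1 = 0 := by
    have := e2 1 1
    simp [Matrix.mul_apply, Fin.sum_univ_two] at this
    linear_combination this
  have had : (↑g : Matrix (Fin 2) (Fin 2) K) 0 0 = (↑g : Matrix (Fin 2) (Fin 2) K) 1 1 := by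
    have := e1 0 1
    simp [Matrix.mul_apply, Fin.sum_univ_two] at this
    linear_combination -this
  -- so A is scalar
  induction x using Projectivization.ind with
  | h v hv =>
    rw [gl_smul_mk]
    refine (Projectivization.mk_eq_mk_iff' ..).mpr ?_
    refine ⟨(↑g : Matrix (Fin 2) (Fin 2) K) 0 0, ?_⟩
    funext i
    fin_cases i <;>
      simp [Matrix.mulVec, dotProduct, Fin.sum_univ_two, hc, hb, ← had, mul_comm]

instance pglAction : MulAction (PGL2 K) (P1 K) :=
  MulAction.compHom _ (QuotientGroup.lift (Subgroup.center (GL (Fin 2) K))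
    (MulAction.toPermHom (GL (Fin 2) K) (P1 K))
    (fun g hg => by
      ext x
      exact center_smul_eq g hg x))

/-- A subset `S` of `PGL(2,K)` is sharply transitive (regular) on the projective line if
for all `x, y` there is a unique `g ∈ S` with `g • x = y`. -/
def SharplyTransitive (S : Set (PGL2 K)) : Prop :=
  ∀ x y : P1 K, ∃! g : PGL2 K, g ∈ S ∧ g • x = y

/-- The point `(1 : 0)` of the projective line. -/
def pt10 (K : Type*) [Field K] : P1 K :=
  Projectivization.mk K ![1, 0] (by intro h; simpa using congrFun h 0)

/-- The point `(0 : 1)` of the projective line. -/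
def pt01 (K : Type*) [Field K] : P1 K :=
  Projectivization.mk K ![0, 1] (by intro h; simpa using congrFun h 1)

/-!
For each point `x`, both `g ↦ g • x` and `g ↦ g⁻¹ • x` are bijections `S → P¹(K)`. Weight every
point of `P¹(K)` other than `0 = (0 : 1)` and `∞ = (1 : 0)` by its affine coordinate; by Wilson's
theorem the product of all weights is `-1`, hence so are the four products over `g ∈ S` of the
weights of `g • ∞`, `g • 0`, `g⁻¹ • ∞`, `g⁻¹ • 0`. For `g = [[α, β], [γ, δ]]` these coordinates are
`α/γ`, `β/δ`, `-δ/γ`, `-β/α`, so the defect `w(g • ∞) w(g⁻¹ • 0) / (w(g • 0) w(g⁻¹ • ∞))`, whose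
product over `S` is `1`, equals `-β/γ / (-β/γ) = 1` unless `g` sends `0` or `∞` into `{0, ∞}`. By
sharp transitivity the exceptional elements of `S` are exactly `g₁, …, g₄`, and their defects
multiply to `c₁ a₂ d₃ b₄ / (b₁ d₂ a₃ c₄)`. The coincidences `g₁ = g₄` and `g₂ = g₃` are harmless
because the representing matrices are then proportional.
-/

open Function

open Classical in
def orOne (x : K) : K := if x = 0 then 1 else x

theorem orOne_of_ne_zero {x : K} (hx : x ≠ 0) : orOne x = x := if_neg hx

theorem orOne_zero : orOne (0 : K) = 1 := if_pos rfl

theorem prod_orOne [Fintype K] : ∏ x : K, orOne x = -1 := by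
  classical
  have units : ∏ u : Kˣ, (u : K) = ∏ x : K, orOne x :=
    Finset.prod_bij_ne_one (fun u _ _ => u) (fun _ _ _ => Finset.mem_univ _)
      (fun _ _ _ _ _ _ h => Units.ext h)
      (fun x _ hx => by
        have hx0 : x ≠ 0 := fun h => hx (h ▸ orOne_zero)
        exact ⟨Units.mk0 x hx0, Finset.mem_univ _, by rwa [orOne_of_ne_zero hx0] at hx, rfl⟩)
      (fun u _ _ => (orOne_of_ne_zero u.ne_zero).symm)
  rw [← units, ← Units.coe_prod, FiniteField.prod_univ_units_id_eq_neg_one, Units.val_neg,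
    Units.val_one]

namespace P1

/-- The affine coordinate `x / y` of `(x : y)`; it is `0` at both `0` and `∞`, since `x / 0 = 0`. -/
def ratio (p : P1 K) : K := p.rep 0 / p.rep 1

def weight (p : P1 K) : K := orOne (ratio p)

theorem ratio_mk (v : Fin 2 → K) (hv : v ≠ 0) : ratio (mk K v hv) = v 0 / v 1 := by
  obtain ⟨a, ha⟩ := exists_smul_eq_mk_rep K v hv
  simp only [ratio, ← ha, Pi.smul_apply, Units.smul_def, smul_eq_mul]
  exact mul_div_mul_left _ _ a.ne_zero

theorem mk_eq_pt10_iff (v : Fin 2 → K) (hv : v ≠ 0) : mk K v hv = pt10 K ↔ v 1 = 0 := by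
  rw [pt10, mk_eq_mk_iff']
  constructor
  · rintro ⟨a, ha⟩
    simpa using (congrFun ha 1).symm
  · intro h
    exact ⟨v 0, funext fun i => by fin_cases i <;> simp [h]⟩

theorem mk_eq_pt01_iff (v : Fin 2 → K) (hv : v ≠ 0) : mk K v hv = pt01 K ↔ v 0 = 0 := by
  rw [pt01, mk_eq_mk_iff']
  constructor
  · rintro ⟨a, ha⟩
    simpa using (congrFun ha 0).symm
  · intro h
    exact ⟨v 1, funext fun i => by fin_cases i <;> simp [h]⟩

theorem pt10_ne_pt01 : pt10 K ≠ pt01 K := fun h => by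
  simpa using (mk_eq_pt01_iff _ _).mp h

open OnePoint in
theorem finprod_weight [Finite K] : ∏ᶠ p : P1 K, weight p = -1 := by
  classical
  have := Fintype.ofFinite K
  rw [← finprod_comp_equiv (equivProjectivization K), finprod_eq_prod_of_fintype]
  refine (Fintype.prod_option fun o : Option K => weight (equivProjectivization K o)).trans ?_
  change weight (equivProjectivization K ∞) * ∏ x : K, weight (equivProjectivization K x) = -1
  simp [weight, ratio_mk, orOne_zero, prod_orOne]

variable (M : GL (Fin 2) K) (v : Fin 2 → K) (hv : v ≠ 0)

theorem ratio_smul_mk :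
    ratio (M • mk K v hv) =
      ((M : Matrix (Fin 2) (Fin 2) K) *ᵥ v) 0 / ((M : Matrix (Fin 2) (Fin 2) K) *ᵥ v) 1 := by
  rw [gl_smul_mk]
  exact ratio_mk _ _

theorem smul_mk_eq_pt10_iff :
    M • mk K v hv = pt10 K ↔ ((M : Matrix (Fin 2) (Fin 2) K) *ᵥ v) 1 = 0 := by
  rw [gl_smul_mk]
  exact mk_eq_pt10_iff _ _

theorem smul_mk_eq_pt01_iff :
    M • mk K v hv = pt01 K ↔ ((M : Matrix (Fin 2) (Fin 2) K) *ᵥ v) 0 = 0 := by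
  rw [gl_smul_mk]
  exact mk_eq_pt01_iff _ _

end P1

theorem disjoint_pair_pair_of_smul_eq {G X : Type*} [Group G] [MulAction G X] [DecidableEq G]
    {x y : X} (hxy : x ≠ y) {g₁ g₂ g₃ g₄ : G} (h₁ : g₁ • x = y) (h₂ : g₂ • y = y)
    (h₃ : g₃ • x = x) (h₄ : g₄ • y = x) : Disjoint ({g₁, g₄} : Finset G) {g₂, g₃} := by
  simp only [Finset.disjoint_insert_left, Finset.disjoint_singleton_left, Finset.mem_insert,
    Finset.mem_singleton, not_or]
  refine ⟨⟨?_, ?_⟩, ?_, ?_⟩ <;> rintro rfl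
  · exact hxy (smul_left_cancel _ (h₁.trans h₂.symm))
  · exact hxy (h₃.symm.trans h₁)
  · exact hxy (h₄.symm.trans h₂)
  · exact hxy (smul_left_cancel _ (h₃.trans h₄.symm))

namespace PGL2

open P1

theorem exists_eq_smul_of_proj_eq {M N : GL (Fin 2) K} (h : proj K M = proj K N) :
    ∃ c : K, (N : Matrix (Fin 2) (Fin 2) K) = c • (M : Matrix (Fin 2) (Fin 2) K) := by
  obtain ⟨c, hc⟩ :=
    Matrix.GeneralLinearGroup.mem_center_iff_val_mem_range_scalar.mp (QuotientGroup.eq.mp h)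
  refine ⟨c, ?_⟩
  rw [← mul_inv_cancel_left M N, Units.val_mul, ← hc, scalar_apply, smul_eq_mul_diagonal]

theorem apply_mul_apply_comm_of_proj_eq {M N : GL (Fin 2) K} (h : proj K M = proj K N)
    (i j k l : Fin 2) : M i j * N k l = M k l * N i j := by
  obtain ⟨c, hc⟩ := exists_eq_smul_of_proj_eq h
  simp only [hc, Matrix.smul_apply, smul_eq_mul]
  ring

variable (M : GL (Fin 2) K)

theorem ratio_proj_smul_pt10 : ratio (proj K M • pt10 K) = M 0 0 / M 1 0 :=
  (ratio_smul_mk M _ _).trans (by simp [mulVec, dotProduct, Fin.sum_univ_two])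

theorem ratio_proj_smul_pt01 : ratio (proj K M • pt01 K) = M 0 1 / M 1 1 :=
  (ratio_smul_mk M _ _).trans (by simp [mulVec, dotProduct, Fin.sum_univ_two])

theorem ratio_inv_proj_smul_pt10 : ratio ((proj K M)⁻¹ • pt10 K) = -M 1 1 / M 1 0 := by
  rw [← map_inv, ratio_proj_smul_pt10]
  simp only [Matrix.coe_units_inv, Matrix.inv_def, adjugate_fin_two]
  simp [M.det_ne_zero, mul_div_mul_left, neg_div, div_neg]

theorem ratio_inv_proj_smul_pt01 : ratio ((proj K M)⁻¹ • pt01 K) = -M 0 1 / M 0 0 := by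
  rw [← map_inv, ratio_proj_smul_pt01]
  simp only [Matrix.coe_units_inv, Matrix.inv_def, adjugate_fin_two]
  simp [M.det_ne_zero, mul_div_mul_left, neg_div]

theorem proj_smul_pt10_eq_pt10_iff : proj K M • pt10 K = pt10 K ↔ M 1 0 = 0 :=
  (smul_mk_eq_pt10_iff M _ _).trans (by simp [mulVec, dotProduct, Fin.sum_univ_two])

theorem proj_smul_pt10_eq_pt01_iff : proj K M • pt10 K = pt01 K ↔ M 0 0 = 0 :=
  (smul_mk_eq_pt01_iff M _ _).trans (by simp [mulVec, dotProduct, Fin.sum_univ_two])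

theorem proj_smul_pt01_eq_pt10_iff : proj K M • pt01 K = pt10 K ↔ M 1 1 = 0 :=
  (smul_mk_eq_pt10_iff M _ _).trans (by simp [mulVec, dotProduct, Fin.sum_univ_two])

theorem proj_smul_pt01_eq_pt01_iff : proj K M • pt01 K = pt01 K ↔ M 0 1 = 0 :=
  (smul_mk_eq_pt01_iff M _ _).trans (by simp [mulVec, dotProduct, Fin.sum_univ_two])

def defect (g : PGL2 K) : K :=
  weight (g • pt10 K) * weight (g⁻¹ • pt01 K) / (weight (g • pt01 K) * weight (g⁻¹ • pt10 K))

theorem defect_proj :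
    defect (proj K M) = orOne (M 0 0 / M 1 0) * orOne (-M 0 1 / M 0 0) /
      (orOne (M 0 1 / M 1 1) * orOne (-M 1 1 / M 1 0)) := by
  simp only [defect, weight, ratio_proj_smul_pt10, ratio_proj_smul_pt01, ratio_inv_proj_smul_pt10,
    ratio_inv_proj_smul_pt01]

theorem defect_eq_one {g : PGL2 K} (h₁ : g • pt10 K ≠ pt10 K) (h₂ : g • pt10 K ≠ pt01 K)
    (h₃ : g • pt01 K ≠ pt10 K) (h₄ : g • pt01 K ≠ pt01 K) : defect g = 1 := by
  obtain ⟨M, rfl⟩ := QuotientGroup.mk'_surjective _ g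
  change defect (proj K M) = 1
  have hγ : M 1 0 ≠ 0 := (proj_smul_pt10_eq_pt10_iff M).not.mp h₁
  have hα : M 0 0 ≠ 0 := (proj_smul_pt10_eq_pt01_iff M).not.mp h₂
  have hδ : M 1 1 ≠ 0 := (proj_smul_pt01_eq_pt10_iff M).not.mp h₃
  have hβ : M 0 1 ≠ 0 := (proj_smul_pt01_eq_pt01_iff M).not.mp h₄
  simp only [defect_proj, orOne_of_ne_zero, div_ne_zero, neg_ne_zero, ne_eq, *, not_false_eq_true]
  field_simp

end PGL2

namespace SharplyTransitive

open P1 PGL2 Set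

variable {S : Set (PGL2 K)}

theorem eq_of_smul_eq (hS : SharplyTransitive S) {g h : PGL2 K} {x y : P1 K} (hg : g ∈ S)
    (hh : h ∈ S) (hgx : g • x = y) (hhx : h • x = y) : g = h :=
  (hS x y).unique ⟨hg, hgx⟩ ⟨hh, hhx⟩

theorem bijOn_smul (hS : SharplyTransitive S) (x : P1 K) : S.BijOn (· • x) univ := by
  refine ⟨mapsTo_univ _ _, fun g hg h hh e => hS.eq_of_smul_eq hg hh e rfl, fun y _ => ?_⟩
  obtain ⟨g, ⟨hg, hgx⟩, -⟩ := hS x y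
  exact ⟨g, hg, hgx⟩

theorem bijOn_inv_smul (hS : SharplyTransitive S) (x : P1 K) :
    S.BijOn (fun g => g⁻¹ • x) univ := by
  refine ⟨mapsTo_univ _ _, fun g hg h hh e => ?_, fun p _ => ?_⟩
  · exact hS.eq_of_smul_eq hg hh (smul_inv_smul g x) ((congrArg _ e).trans (smul_inv_smul h x))
  · obtain ⟨g, ⟨hg, hgp⟩, -⟩ := hS p x
    exact ⟨g, hg, inv_smul_eq_iff.mpr hgp.symm⟩

theorem finprod_defect [Finite K] (hS : SharplyTransitive S) : ∏ᶠ g ∈ S, defect g = 1 := by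
  have hfin := S.toFinite
  have hwilson (f : PGL2 K → P1 K) (hf : S.BijOn f univ) : ∏ᶠ g ∈ S, weight (f g) = -1 :=
    (finprod_mem_eq_of_bijOn f hf fun _ _ => rfl).trans
      (by rw [finprod_mem_univ]; exact finprod_weight)
  simp only [defect]
  rw [finprod_mem_div_distrib _ _ hfin, finprod_mem_mul_distrib hfin, finprod_mem_mul_distrib hfin,
    hwilson _ (hS.bijOn_smul _), hwilson _ (hS.bijOn_smul _), hwilson _ (hS.bijOn_inv_smul _),
    hwilson _ (hS.bijOn_inv_smul _)]
  norm_num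

theorem inter_mulSupport_defect_subset (hS : SharplyTransitive S) {g₁ g₂ g₃ g₄ : PGL2 K}
    (h₁ : g₁ ∈ S) (h₂ : g₂ ∈ S) (h₃ : g₃ ∈ S) (h₄ : g₄ ∈ S) (e₁ : g₁ • pt10 K = pt01 K)
    (e₂ : g₂ • pt01 K = pt01 K) (e₃ : g₃ • pt10 K = pt10 K) (e₄ : g₄ • pt01 K = pt10 K) :
    S ∩ mulSupport defect ⊆ {g₁, g₄} ∪ {g₂, g₃} := by
  rintro g ⟨hg, hd⟩
  by_contra hE
  simp only [mem_union, mem_insert_iff, mem_singleton_iff, not_or] at hE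
  obtain ⟨⟨n₁, n₄⟩, n₂, n₃⟩ := hE
  exact hd (defect_eq_one (fun e => n₃ (hS.eq_of_smul_eq hg h₃ e e₃))
    (fun e => n₁ (hS.eq_of_smul_eq hg h₁ e e₁)) (fun e => n₄ (hS.eq_of_smul_eq hg h₄ e e₄))
    (fun e => n₂ (hS.eq_of_smul_eq hg h₂ e e₂)))

theorem prod_defect_antidiag_pair [DecidableEq (PGL2 K)] (hS : SharplyTransitive S)
    {M N : GL (Fin 2) K} (hMS : proj K M ∈ S) (hNS : proj K N ∈ S) (hM : M 0 0 = 0)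
    (hN : N 1 1 = 0) :
    ∏ g ∈ {proj K M, proj K N}, defect g = M 1 0 * N 0 1 / (M 0 1 * N 1 0) := by
  obtain ⟨hM01, hM10⟩ : M 0 1 ≠ 0 ∧ M 1 0 ≠ 0 := by simpa [det_fin_two, hM] using M.det_ne_zero
  obtain ⟨hN01, hN10⟩ : N 0 1 ≠ 0 ∧ N 1 0 ≠ 0 := by simpa [det_fin_two, hN] using N.det_ne_zero
  have eM : proj K M • pt10 K = pt01 K := (proj_smul_pt10_eq_pt01_iff M).mpr hM
  have eN : proj K N • pt01 K = pt10 K := (proj_smul_pt01_eq_pt10_iff N).mpr hN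
  by_cases hMN : proj K M = proj K N
  · have hN00 : N 0 0 = 0 := (proj_smul_pt10_eq_pt01_iff N).mp (hMN ▸ eM)
    rw [hMN, Finset.pair_eq_singleton, Finset.prod_singleton, defect_proj, hN00, hN,
      apply_mul_apply_comm_of_proj_eq hMN 1 0 0 1]
    simp [orOne_zero, hM01, hN10]
  · have hM11 : M 1 1 ≠ 0 := fun h =>
      hMN (hS.eq_of_smul_eq hMS hNS ((proj_smul_pt01_eq_pt10_iff M).mpr h) eN)
    have hN00 : N 0 0 ≠ 0 := fun h =>
      hMN (hS.eq_of_smul_eq hMS hNS eM ((proj_smul_pt10_eq_pt01_iff N).mpr h))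
    rw [Finset.prod_pair hMN, defect_proj, defect_proj, hM, hN]
    simp only [zero_div, div_zero, neg_zero, orOne_zero, orOne_of_ne_zero, div_ne_zero, neg_ne_zero,
      ne_eq, not_false_eq_true, *]
    field_simp

theorem prod_defect_diag_pair [DecidableEq (PGL2 K)] (hS : SharplyTransitive S)
    {M N : GL (Fin 2) K} (hMS : proj K M ∈ S) (hNS : proj K N ∈ S) (hM : M 0 1 = 0)
    (hN : N 1 0 = 0) :
    ∏ g ∈ {proj K M, proj K N}, defect g = M 0 0 * N 1 1 / (M 1 1 * N 0 0) := by
  obtain ⟨hM00, hM11⟩ : M 0 0 ≠ 0 ∧ M 1 1 ≠ 0 := by simpa [det_fin_two, hM] using M.det_ne_zero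
  obtain ⟨hN00, hN11⟩ : N 0 0 ≠ 0 ∧ N 1 1 ≠ 0 := by simpa [det_fin_two, hN] using N.det_ne_zero
  have eM : proj K M • pt01 K = pt01 K := (proj_smul_pt01_eq_pt01_iff M).mpr hM
  have eN : proj K N • pt10 K = pt10 K := (proj_smul_pt10_eq_pt10_iff N).mpr hN
  by_cases hMN : proj K M = proj K N
  · have hN01 : N 0 1 = 0 := (proj_smul_pt01_eq_pt01_iff N).mp (hMN ▸ eM)
    rw [hMN, Finset.pair_eq_singleton, Finset.prod_singleton, defect_proj, hN01, hN,
      apply_mul_apply_comm_of_proj_eq hMN 0 0 1 1]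
    simp [orOne_zero, hM11, hN00]
  · have hM10 : M 1 0 ≠ 0 := fun h =>
      hMN (hS.eq_of_smul_eq hMS hNS ((proj_smul_pt10_eq_pt10_iff M).mpr h) eN)
    have hN01 : N 0 1 ≠ 0 := fun h =>
      hMN (hS.eq_of_smul_eq hMS hNS eM ((proj_smul_pt01_eq_pt01_iff N).mpr h))
    rw [Finset.prod_pair hMN, defect_proj, defect_proj, hM, hN]
    simp only [zero_div, div_zero, neg_zero, orOne_zero, orOne_of_ne_zero, div_ne_zero, neg_ne_zero,
      ne_eq, not_false_eq_true, *]
    field_simp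

end SharplyTransitive

open P1 PGL2

theorem lemma_of_tangents
    {K : Type*} [Field K] [Fintype K] (S : Set (PGL2 K)) (hS : SharplyTransitive S)
    (b1 c1 d1 a2 c2 d2 a3 b3 d3 a4 b4 c4 : K)
    (M1 M2 M3 M4 : GL (Fin 2) K)
    (hM1 : (M1 : Matrix (Fin 2) (Fin 2) K) = !![0, b1; c1, d1])
    (hM2 : (M2 : Matrix (Fin 2) (Fin 2) K) = !![a2, 0; c2, d2])
    (hM3 : (M3 : Matrix (Fin 2) (Fin 2) K) = !![a3, b3; 0, d3])
    (hM4 : (M4 : Matrix (Fin 2) (Fin 2) K) = !![a4, b4; c4, 0])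
    (h1 : PGL2.proj K M1 ∈ S) (h2 : PGL2.proj K M2 ∈ S)
    (h3 : PGL2.proj K M3 ∈ S) (h4 : PGL2.proj K M4 ∈ S) :
    b1 * d2 * a3 * c4 = c1 * a2 * d3 * b4 := by
  classical
  have e1 : proj K M1 • pt10 K = pt01 K := (proj_smul_pt10_eq_pt01_iff M1).mpr (by simp [hM1])
  have e2 : proj K M2 • pt01 K = pt01 K := (proj_smul_pt01_eq_pt01_iff M2).mpr (by simp [hM2])
  have e3 : proj K M3 • pt10 K = pt10 K := (proj_smul_pt10_eq_pt10_iff M3).mpr (by simp [hM3])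
  have e4 : proj K M4 • pt01 K = pt10 K := (proj_smul_pt01_eq_pt10_iff M4).mpr (by simp [hM4])
  have key : ∏ᶠ g ∈ S, defect g =
      ∏ g ∈ {proj K M1, proj K M4} ∪ {proj K M2, proj K M3}, defect g := by
    refine finprod_mem_eq_prod_of_subset _ ?_ ?_ <;>
      simp only [Finset.coe_union, Finset.coe_pair]
    · exact hS.inter_mulSupport_defect_subset h1 h2 h3 h4 e1 e2 e3 e4
    · simp [Set.insert_subset_iff, h1, h2, h3, h4]
  rw [hS.finprod_defect,
    Finset.prod_union (disjoint_pair_pair_of_smul_eq pt10_ne_pt01 e1 e2 e3 e4),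
    hS.prod_defect_antidiag_pair h1 h4 (by simp [hM1]) (by simp [hM4]),
    hS.prod_defect_diag_pair h2 h3 (by simp [hM2]) (by simp [hM3])] at key
  simp only [hM1, hM2, hM3, hM4, of_apply, cons_val', cons_val_zero, cons_val_one] at key
  obtain ⟨hb1, -⟩ : b1 ≠ 0 ∧ c1 ≠ 0 := by simpa [hM1, det_fin_two_of] using M1.det_ne_zero
  obtain ⟨-, hd2⟩ : a2 ≠ 0 ∧ d2 ≠ 0 := by simpa [hM2, det_fin_two_of] using M2.det_ne_zero
  obtain ⟨ha3, -⟩ : a3 ≠ 0 ∧ d3 ≠ 0 := by simpa [hM3, det_fin_two_of] using M3.det_ne_zero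
  obtain ⟨-, hc4⟩ : b4 ≠ 0 ∧ c4 ≠ 0 := by simpa [hM4, det_fin_two_of] using M4.det_ne_zero
  field_simp at key
  linear_combination key
end
end

section
/- Let K be a finite field and let S be a sharply transitive subset of PGL(2,K) on P^1(K) containing the identity. Then for all g, h ∈ S, the product g h lies in S (i.e., S is closed under multiplication). -/
open Matrix Projectivization

noncomputable section

variable {K : Type*} [Field K]

/-!
For each `s ∈ S` choose a matrix `M_s` and put `F(X, Y) = ∏_s (Y₀ (M_s X)₁ - Y₁ (M_s X)₀)`,
where `q = |K|` and `|S| = q + 1`. By transitivity `F` vanishes on `K² × K²`, and it is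
bihomogeneous of bidegree `(q + 1, q + 1)`. A binary form of degree `q + 1` vanishing on `K²`
is a multiple of the Moore form `P = X₀^q X₁ - X₀ X₁^q`; applied in both sets of variables this
gives `F = a(Y) P(X) + P(Y) b(X)`. As `P(M X) = det M · P(X)`, substituting `Y = M X` yields
`F(X, M X) = P(X) (a(M X) + det M · b(X))`, and `1 ∈ S` forces `b = -a`. Hence a matrix `M`
represents an element of `S` iff `F(X, M X) = 0` iff `a(M X) = det M · a(X)`, a condition
that is closed under products.
-/

open MvPolynomial

lemma Polynomial.eval_one_zero_homogenize {R : Type*} [CommRing R] (p : Polynomial R) (n : ℕ) :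
    MvPolynomial.eval ![1, 0] (p.homogenize n) = p.coeff n := by
  rw [Polynomial.homogenize, map_sum, Finset.sum_eq_single (n, 0)]
  · simp [MvPolynomial.eval_monomial]
  · rintro ⟨k, l⟩ hkl hne
    have hl : l ≠ 0 := by rintro rfl; simp_all
    simp [MvPolynomial.eval_monomial, hl]
  · simp

lemma MvPolynomial.IsHomogeneous.natDegree_aeval_X_one_le {R : Type*} [CommRing R]
    {g : MvPolynomial (Fin 2) R} {n : ℕ} (hg : g.IsHomogeneous n) :
    (MvPolynomial.aeval (![Polynomial.X, 1] : Fin 2 → Polynomial R) g).natDegree ≤ n := by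
  rw [g.as_sum, map_sum]
  refine Polynomial.natDegree_sum_le_of_forall_le _ _ fun m hm => ?_
  rw [aeval_monomial, Finsupp.prod_fintype _ _ (by simp), Fin.prod_univ_two]
  simp only [Matrix.cons_val_zero, Matrix.cons_val_one, one_pow, mul_one]
  refine (Polynomial.natDegree_C_mul_le _ _).trans ?_
  exact (Polynomial.natDegree_X_pow_le _).trans
    ((Finsupp.le_weight 1 one_ne_zero m).trans_eq (hg (mem_support_iff.mp hm)))

lemma MvPolynomial.isHomogeneous_coeff_prod {σ τ ι R : Type*} [CommSemiring R] (s : Finset ι)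
    (f : ι → MvPolynomial σ (MvPolynomial τ R)) (n : ι → ℕ)
    (h : ∀ i ∈ s, ∀ d, ((f i).coeff d).IsHomogeneous (n i)) (d : σ →₀ ℕ) :
    ((∏ i ∈ s, f i).coeff d).IsHomogeneous (∑ i ∈ s, n i) := by
  classical
  induction s using Finset.cons_induction generalizing d with
  | empty =>
    rw [Finset.prod_empty, Finset.sum_empty, coeff_one]
    split_ifs
    exacts [isHomogeneous_one _ _, isHomogeneous_zero _ _ _]
  | cons i s _ ih =>
    rw [Finset.prod_cons, Finset.sum_cons, coeff_mul]
    rw [Finset.forall_mem_cons] at h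
    exact IsHomogeneous.sum _ _ _ fun e _ => (h.1 e.1).mul (ih h.2 e.2)

lemma Matrix.toMvPolynomial_smul {m n R : Type*} [Fintype n] [CommSemiring R] (c : R)
    (M : Matrix m n R) (i : m) : (c • M).toMvPolynomial i = C c * M.toMvPolynomial i := by
  simp [Matrix.toMvPolynomial, Finset.mul_sum, C_mul_monomial]

lemma Matrix.exists_eq_smul_of_mulVec_parallel {M N : Matrix (Fin 2) (Fin 2) K} (hN : N.det ≠ 0)
    (h : ∀ x, (M *ᵥ x) 0 * (N *ᵥ x) 1 = (M *ᵥ x) 1 * (N *ᵥ x) 0) :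
    ∃ c : K, M = c • N := by
  have e₀ := h ![1, 0]
  have e₁ := h ![0, 1]
  have e₂ := h ![1, 1]
  simp [Matrix.mulVec, dotProduct, Fin.sum_univ_two] at e₀ e₁ e₂
  -- `e₀, e₁, e₂` say that `adjugate N * M` is scalar, namely `M 0 0 * N 1 1 - M 1 0 * N 0 1`
  have hadj : N.det • M = (M 0 0 * N 1 1 - M 1 0 * N 0 1) • N := by
    ext i j
    fin_cases i <;> fin_cases j <;> simp [Matrix.det_fin_two]
    · linear_combination (-N 0 1) * e₀
    · linear_combination N 0 1 * e₀ + (N 0 0 + N 0 1) * e₁ - N 0 1 * e₂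
    · linear_combination (-N 1 1) * e₀
    · linear_combination N 1 1 * e₀ + (N 1 0 + N 1 1) * e₁ - N 1 1 * e₂
  refine ⟨N.det⁻¹ * (M 0 0 * N 1 1 - M 1 0 * N 0 1), ?_⟩
  rw [mul_smul, ← hadj, smul_smul, inv_mul_cancel₀ hN, one_smul]

lemma Matrix.GeneralLinearGroup.mk_eq_mk_iff {n R : Type*} [Fintype n] [DecidableEq n]
    [CommRing R] {A B : GL n R} :
    (A : GL n R ⧸ Subgroup.center (GL n R)) = B ↔
      ∃ c : Rˣ, (B : Matrix n n R) = (c : R) • (A : Matrix n n R) := by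
  rw [QuotientGroup.eq, Matrix.GeneralLinearGroup.center_eq_range_scalar, MonoidHom.mem_range]
  constructor
  · rintro ⟨c, hc⟩
    refine ⟨c, ?_⟩
    rw [show B = A * (A⁻¹ * B) by group, ← hc, Units.val_mul,
      Matrix.GeneralLinearGroup.coe_scalar]
    simp [← Matrix.smul_one_eq_diagonal]
  · rintro ⟨c, hc⟩
    refine ⟨c, ?_⟩
    ext : 1
    rw [Units.val_mul, Matrix.GeneralLinearGroup.coe_scalar, Matrix.coe_units_inv, hc]
    simp [← Matrix.smul_one_eq_diagonal]

def detSemiInvariantSubmonoid {n R : Type*} [Fintype n] [DecidableEq n] [CommRing R]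
    (a : MvPolynomial n R) : Submonoid (Matrix n n R) where
  carrier := {M | bind₁ M.toMvPolynomial a = C M.det * a}
  one_mem' := by simp
  mul_mem' {M N} hM hN := by
    simp only [Set.mem_ofPred_eq] at hM hN ⊢
    rw [funext (Matrix.toMvPolynomial_mul M N), ← bind₁_bind₁, hM, map_mul, hN,
      bind₁_C_right, Matrix.det_mul, C_mul]
    ring

section MooreForm

variable (R : Type*) [CommRing R]

def mooreForm (q : ℕ) : MvPolynomial (Fin 2) R := X 0 ^ q * X 1 - X 0 * X 1 ^ q

variable {R}

lemma coeff_mooreForm_single_add_single [Nontrivial R] {q : ℕ} (hq : q ≠ 1) :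
    coeff (Finsupp.single 0 q + Finsupp.single 1 1) (mooreForm R q) = 1 := by
  rw [mooreForm, X_pow_eq_monomial, X_pow_eq_monomial]
  simp [X, monomial_mul, coeff_monomial, Finsupp.ext_iff, Fin.forall_fin_two, hq]

lemma mooreForm_ne_zero [Nontrivial R] {q : ℕ} (hq : q ≠ 1) : mooreForm R q ≠ 0 := fun h => by
  simpa [h] using coeff_mooreForm_single_add_single (R := R) hq

lemma map_C_mooreForm (q : ℕ) :
    MvPolynomial.map (C : R →+* MvPolynomial (Fin 2) R) (mooreForm R q) = mooreForm _ q := by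
  simp [mooreForm]

end MooreForm

section FiniteField

variable [Fintype K]

lemma Polynomial.eq_C_mul_X_pow_card_sub_X {p : Polynomial K}
    (hdeg : p.natDegree ≤ Fintype.card K) (hp : ∀ c, p.eval c = 0) :
    p = C (p.coeff (Fintype.card K)) * (X ^ Fintype.card K - X) := by
  have hq : 1 < Fintype.card K := Fintype.one_lt_card
  rw [← sub_eq_zero]
  refine eq_zero_of_degree_lt_of_eval_finset_eq_zero Finset.univ ?_
    (by simp [hp, FiniteField.pow_card])
  rw [Finset.card_univ, degree_lt_iff_coeff_zero]
  intro m hm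
  rcases hm.eq_or_lt with rfl | hm
  · simp [coeff_X, hq.ne]
  · simp [coeff_X, coeff_X_pow, hm.ne', (hq.trans hm).ne,
      coeff_eq_zero_of_natDegree_lt (hdeg.trans_lt hm)]

lemma MvPolynomial.IsHomogeneous.exists_eq_C_mul_mooreForm {g : MvPolynomial (Fin 2) K}
    (hg : g.IsHomogeneous (Fintype.card K + 1)) (h : ∀ x, eval x g = 0) :
    ∃ c, g = C c * mooreForm K (Fintype.card K) := by
  set q := Fintype.card K
  set p := MvPolynomial.aeval (![Polynomial.X, 1] : Fin 2 → Polynomial K) g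
  have hgp : p.homogenize (q + 1) = g := Polynomial.homogenize_eq_of_isHomogeneous hg rfl
  have hdeg : p.natDegree ≤ q := by
    have htop : p.coeff (q + 1) = 0 := by rw [← Polynomial.eval_one_zero_homogenize, hgp, h]
    rw [Polynomial.natDegree_le_iff_coeff_eq_zero]
    intro N hN
    rcases (Nat.succ_le_of_lt hN).eq_or_lt with rfl | hN
    · exact htop
    · exact Polynomial.coeff_eq_zero_of_natDegree_lt (hg.natDegree_aeval_X_one_le.trans_lt hN)
  have hp : ∀ c, p.eval c = 0 := fun c => by
    simpa [← hgp, Polynomial.eval_homogenize (hdeg.trans q.le_succ)] using h ![c, 1]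
  obtain ⟨c, hc⟩ : ∃ c, p = Polynomial.C c * (Polynomial.X ^ q - Polynomial.X) :=
    ⟨_, Polynomial.eq_C_mul_X_pow_card_sub_X hdeg hp⟩
  refine ⟨c, ?_⟩
  rw [← hgp, hc]
  simp [mooreForm, Polynomial.homogenize_X_pow, mul_sub]

lemma Matrix.toMvPolynomial_pow_card {m n : Type*} [Fintype n] (M : Matrix m n K) (i : m) :
    M.toMvPolynomial i ^ Fintype.card K = ∑ j, C (M i j) * X j ^ Fintype.card K := by
  obtain ⟨p, _, k, hp, hcard⟩ := FiniteField.card' K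
  have : Fact p.Prime := ⟨hp⟩
  rw [Matrix.toMvPolynomial, hcard, sum_pow_char_pow]
  simp_rw [← C_mul_X_eq_monomial, mul_pow, ← C_pow, ← hcard, FiniteField.pow_card]

lemma bind₁_toMvPolynomial_mooreForm (M : Matrix (Fin 2) (Fin 2) K) :
    bind₁ M.toMvPolynomial (mooreForm K (Fintype.card K)) =
      C M.det * mooreForm K (Fintype.card K) := by
  simp only [mooreForm, map_sub, map_mul, map_pow, bind₁_X_right, Matrix.toMvPolynomial_pow_card]
  simp only [Matrix.toMvPolynomial, Fin.sum_univ_two, ← C_mul_X_eq_monomial, Matrix.det_fin_two,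
    C_sub, C_mul]
  ring

lemma exists_eq_C_mul_mooreForm_add_C_mooreForm_mul
    {F : MvPolynomial (Fin 2) (MvPolynomial (Fin 2) K)}
    (hX : F.IsHomogeneous (Fintype.card K + 1))
    (hY : ∀ d, (F.coeff d).IsHomogeneous (Fintype.card K + 1))
    (hF : ∀ x y, eval x (MvPolynomial.map (eval y) F) = 0) :
    ∃ a b, F = C a * mooreForm _ (Fintype.card K) +
      C (mooreForm K (Fintype.card K)) * MvPolynomial.map C b := by
  set q := Fintype.card K
  set d₀ : Fin 2 →₀ ℕ := Finsupp.single 0 q + Finsupp.single 1 1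
  have hP : coeff d₀ (mooreForm K q) = 1 :=
    coeff_mooreForm_single_add_single Fintype.one_lt_card.ne'
  set a := F.coeff d₀
  have hpt : ∀ y, MvPolynomial.map (eval y) F = C (eval y a) * mooreForm K q := by
    intro y
    obtain ⟨μ, hμ⟩ := (hX.map (eval y)).exists_eq_C_mul_mooreForm (hF · y)
    have := congrArg (coeff d₀) hμ
    rw [coeff_map, coeff_C_mul, hP, mul_one] at this
    rw [hμ, this]
  set G := F - C a * mooreForm _ q with hGdef
  have hG : ∀ d, ∃ γ, G.coeff d = C γ * mooreForm K q := by
    intro d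
    have hGd : G.coeff d = F.coeff d - a * C (coeff d (mooreForm K q)) := by
      rw [hGdef, coeff_sub, coeff_C_mul, ← map_C_mooreForm, coeff_map]
    rw [hGd]
    apply IsHomogeneous.exists_eq_C_mul_mooreForm
    · simpa using (hY d).sub ((hY d₀).mul (isHomogeneous_C _ _))
    · intro y
      have := congrArg (coeff d) (hpt y)
      rw [coeff_map, coeff_C_mul] at this
      simp [this]
  choose γ hγ using hG
  refine ⟨a, ∑ d ∈ G.support, monomial d (γ d), ?_⟩
  rw [← sub_eq_iff_eq_add', ← hGdef, map_sum, Finset.mul_sum]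
  conv_lhs => rw [G.as_sum]
  simp only [hγ, map_monomial, C_mul_monomial, mul_comm]

end FiniteField

section GraphForm

variable {R : Type*} [CommRing R]

/-- `Y₀ (M X)₁ - Y₁ (M X)₀`, with `Y` the variables of the coefficient ring: it vanishes at
`(x, y)` iff `M x` and `y` are proportional. -/
def graphForm (M : Matrix (Fin 2) (Fin 2) R) : MvPolynomial (Fin 2) (MvPolynomial (Fin 2) R) :=
  C (X 0) * MvPolynomial.map C (M.toMvPolynomial 1) -
    C (X 1) * MvPolynomial.map C (M.toMvPolynomial 0)

/-- `F(X, Y) ↦ F(X, M X)`. -/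
def onGraph (M : Matrix (Fin 2) (Fin 2) R) :
    MvPolynomial (Fin 2) (MvPolynomial (Fin 2) R) →+* MvPolynomial (Fin 2) R :=
  eval₂Hom (bind₁ M.toMvPolynomial).toRingHom X

variable (M : Matrix (Fin 2) (Fin 2) R)

lemma onGraph_C (u : MvPolynomial (Fin 2) R) : onGraph M (C u) = bind₁ M.toMvPolynomial u :=
  eval₂_C _ _ _

lemma onGraph_X (i : Fin 2) : onGraph M (X i) = X i :=
  eval₂_X _ _ _

lemma onGraph_map_C (b : MvPolynomial (Fin 2) R) : onGraph M (MvPolynomial.map C b) = b := by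
  rw [onGraph, coe_eval₂Hom, eval₂_map]
  convert eval₂_eta b
  ext
  simp

lemma onGraph_mooreForm (q : ℕ) : onGraph M (mooreForm _ q) = mooreForm R q := by
  simp [mooreForm, onGraph_X]

lemma onGraph_graphForm (N : Matrix (Fin 2) (Fin 2) R) :
    onGraph M (graphForm N) =
      M.toMvPolynomial 0 * N.toMvPolynomial 1 - M.toMvPolynomial 1 * N.toMvPolynomial 0 := by
  simp [graphForm, onGraph_C, onGraph_map_C]

lemma eval_map_eval_graphForm (x y : Fin 2 → R) :
    eval x (MvPolynomial.map (eval y) (graphForm M)) = y 0 * (M *ᵥ x) 1 - y 1 * (M *ᵥ x) 0 := by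
  have hC : (eval y).comp C = RingHom.id R := by ext; simp
  simp [graphForm, hC, Matrix.toMvPolynomial_eval_eq_apply]

lemma isHomogeneous_graphForm : (graphForm M).IsHomogeneous 1 :=
  (((M.toMvPolynomial_isHomogeneous 1).map C).C_mul _).sub
    (((M.toMvPolynomial_isHomogeneous 0).map C).C_mul _)

lemma isHomogeneous_coeff_graphForm (d : Fin 2 →₀ ℕ) :
    ((graphForm M).coeff d).IsHomogeneous 1 := by
  rw [graphForm, coeff_sub, coeff_C_mul, coeff_C_mul, coeff_map, coeff_map]
  exact ((isHomogeneous_X R 0).mul (isHomogeneous_C _ _)).sub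
    ((isHomogeneous_X R 1).mul (isHomogeneous_C _ _))

end GraphForm

lemma onGraph_graphForm_eq_zero_iff (A B : GL (Fin 2) K) :
    onGraph (A : Matrix (Fin 2) (Fin 2) K) (graphForm B) = 0 ↔ (A : PGL2 K) = B := by
  rw [Matrix.GeneralLinearGroup.mk_eq_mk_iff, onGraph_graphForm]
  constructor
  · intro h
    obtain ⟨c, hc⟩ :=
      Matrix.exists_eq_smul_of_mulVec_parallel (M := B) A.det_ne_zero fun x => by
        have hx := congrArg (eval x) h
        simp only [map_sub, map_mul, map_zero, Matrix.toMvPolynomial_eval_eq_apply] at hx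
        linear_combination -hx
    have hc0 : c ≠ 0 := by
      rintro rfl
      exact B.det_ne_zero (by simp [hc])
    exact ⟨Units.mk0 c hc0, hc⟩
  · rintro ⟨c, hc⟩
    rw [hc, Matrix.toMvPolynomial_smul, Matrix.toMvPolynomial_smul]
    ring

lemma eval_map_eval_graphForm_eq_zero_of_smul_eq (g : GL (Fin 2) K) {x y : Fin 2 → K}
    (hx : x ≠ 0) (hy : y ≠ 0)
    (h : g • Projectivization.mk K x hx = Projectivization.mk K y hy) :
    eval x (MvPolynomial.map (eval y) (graphForm g)) = 0 := by
  rw [gl_smul_mk] at h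
  obtain ⟨a, ha⟩ := (Projectivization.mk_eq_mk_iff ..).mp h
  rw [eval_map_eval_graphForm, ← ha]
  simp only [Pi.smul_apply, Units.smul_def, smul_eq_mul]
  ring

def graphProduct (T : Finset (PGL2 K)) : MvPolynomial (Fin 2) (MvPolynomial (Fin 2) K) :=
  ∏ s ∈ T, graphForm (s.out : Matrix (Fin 2) (Fin 2) K)

lemma onGraph_graphProduct_eq_zero_iff (T : Finset (PGL2 K)) (A : GL (Fin 2) K) :
    onGraph (A : Matrix (Fin 2) (Fin 2) K) (graphProduct T) = 0 ↔ (A : PGL2 K) ∈ T := by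
  simp only [graphProduct, map_prod, Finset.prod_eq_zero_iff, onGraph_graphForm_eq_zero_iff,
    QuotientGroup.out_eq', exists_eq_right']

lemma isHomogeneous_graphProduct (T : Finset (PGL2 K)) :
    (graphProduct T).IsHomogeneous T.card := by
  simpa [graphProduct] using
    IsHomogeneous.prod T _ (fun _ => 1) fun s _ => isHomogeneous_graphForm _

lemma isHomogeneous_coeff_graphProduct (T : Finset (PGL2 K)) (d : Fin 2 →₀ ℕ) :
    ((graphProduct T).coeff d).IsHomogeneous T.card := by
  simpa [graphProduct] using isHomogeneous_coeff_prod T _ (fun _ => 1)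
    (fun s _ => isHomogeneous_coeff_graphForm _) d

namespace SharplyTransitive

variable {S : Set (PGL2 K)}

lemma nat_card_eq [Finite K] (hS : SharplyTransitive S) : Nat.card S = Nat.card K + 1 := by
  have hbij : Function.Bijective fun s : S => (s : PGL2 K) • pt10 K := by
    refine ⟨fun s t hst => ?_, fun y => ?_⟩
    · obtain ⟨u, -, hu⟩ := hS (pt10 K) ((s : PGL2 K) • pt10 K)
      exact Subtype.ext ((hu s ⟨s.2, rfl⟩).trans (hu t ⟨t.2, hst.symm⟩).symm)
    · obtain ⟨u, ⟨hu, rfl⟩, -⟩ := hS (pt10 K) y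
      exact ⟨⟨u, hu⟩, rfl⟩
  rw [Nat.card_congr (Equiv.ofBijective _ hbij),
    Projectivization.card_of_finrank_two _ _ (Module.finrank_fin_fun K)]

lemma exists_mem_eval_graphForm_eq_zero (hS : SharplyTransitive S) (x y : Fin 2 → K) :
    ∃ s ∈ S,
      eval x (MvPolynomial.map (eval y) (graphForm (s.out : Matrix (Fin 2) (Fin 2) K))) = 0 := by
  by_cases hxy : x = 0 ∨ y = 0
  · obtain ⟨s, ⟨hs, -⟩, -⟩ := hS (pt10 K) (pt10 K)
    refine ⟨s, hs, ?_⟩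
    rw [eval_map_eval_graphForm]
    rcases hxy with rfl | rfl <;> simp
  · rw [not_or] at hxy
    obtain ⟨s, ⟨hs, hsxy⟩, -⟩ :=
      hS (Projectivization.mk K x hxy.1) (Projectivization.mk K y hxy.2)
    refine ⟨s, hs, eval_map_eval_graphForm_eq_zero_of_smul_eq _ hxy.1 hxy.2 ?_⟩
    rwa [← QuotientGroup.out_eq' s] at hsxy

theorem exists_mem_iff_mem_detSemiInvariantSubmonoid [Fintype K] (hS : SharplyTransitive S)
    (h1 : (1 : PGL2 K) ∈ S) :
    ∃ a : MvPolynomial (Fin 2) K, ∀ A : GL (Fin 2) K,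
      (A : PGL2 K) ∈ S ↔ (A : Matrix (Fin 2) (Fin 2) K) ∈ detSemiInvariantSubmonoid a := by
  set T := S.toFinite.toFinset
  have hT : ∀ s, s ∈ T ↔ s ∈ S := fun s => Set.Finite.mem_toFinset _
  have hcard : T.card = Fintype.card K + 1 := by
    rw [← Set.ncard_eq_toFinset_card, ← Nat.card_coe_set_eq, hS.nat_card_eq,
      Nat.card_eq_fintype_card]
  have hF : ∀ x y, eval x (MvPolynomial.map (eval y) (graphProduct T)) = 0 := fun x y => by
    obtain ⟨s, hs, h⟩ := hS.exists_mem_eval_graphForm_eq_zero x y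
    simp only [graphProduct, map_prod]
    exact Finset.prod_eq_zero ((hT s).2 hs) h
  obtain ⟨a, b, hab⟩ := exists_eq_C_mul_mooreForm_add_C_mooreForm_mul
    (hcard ▸ isHomogeneous_graphProduct T) (hcard ▸ isHomogeneous_coeff_graphProduct T) hF
  have hon : ∀ M : Matrix (Fin 2) (Fin 2) K, onGraph M (graphProduct T) =
      mooreForm K (Fintype.card K) * (bind₁ M.toMvPolynomial a + C M.det * b) := fun M => by
    rw [hab]
    simp only [map_add, map_mul, onGraph_C, onGraph_map_C, onGraph_mooreForm,
      bind₁_toMvPolynomial_mooreForm]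
    ring
  have hP : mooreForm K (Fintype.card K) ≠ 0 := mooreForm_ne_zero Fintype.one_lt_card.ne'
  have hb : b = -a := by
    have := (onGraph_graphProduct_eq_zero_iff T 1).2 ((hT 1).2 h1)
    rw [Units.val_one, hon, Matrix.toMvPolynomial_one, bind₁_X_left] at this
    simpa [hP, eq_neg_iff_add_eq_zero, add_comm] using this
  refine ⟨a, fun A => ?_⟩
  rw [← hT, ← onGraph_graphProduct_eq_zero_iff, hon, hb]
  simp [hP, detSemiInvariantSubmonoid, ← sub_eq_add_neg, sub_eq_zero]

end SharplyTransitive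

theorem sharply_transitive_closed_under_mul
    {K : Type*} [Field K] [Fintype K] (S : Set (PGL2 K)) (hS : SharplyTransitive S)
    (h1 : (1 : PGL2 K) ∈ S) :
    ∀ g ∈ S, ∀ h ∈ S, g * h ∈ S := by
  obtain ⟨a, ha⟩ := hS.exists_mem_iff_mem_detSemiInvariantSubmonoid h1
  intro g hg h hh
  induction g using QuotientGroup.induction_on with | H A => ?_
  induction h using QuotientGroup.induction_on with | H B => ?_
  rw [ha] at hg hh
  rw [← QuotientGroup.mk_mul, ha, Units.val_mul]
  exact mul_mem hg hh
end
end
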